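/- arXiv:2605.19068 — 2 statements merged into one kernel-verified Lean document; each statement's English description precedes it below -/
import Mathlib

section
/- Let A be a compact convex subset of R^3 containing the origin with diameter at most 1. Then there exist two orthogonal unit vectors u_1, u_2 such that A is contained in the set {x ∈ R^3 : |⟨u_1,x⟩| ≤ 1/2 and |⟨u_2,x⟩| ≤ 1/2}. -/
/-!
Let `h(u) = sup_{x ∈ A} ⟪u, x⟫` be the support function of `A`. For a unit vector `u`,
`h(u) + h(-u)` is the width of `A` in direction `u`, hence at most `diam A ≤ 1`; so whenever
`h(-u) = h(u)`, the set `A` lies in the slab `|⟪u, x⟫| ≤ 1/2`. Since `h` is continuous and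
`u ↦ h(-u) - h(u)` is odd, it changes sign between `v` and `-v` on any unit sphere of dimension
at least one, which is connected, so it vanishes there. One zero `u₁` on the unit sphere of `ℝ³`
and a second zero `u₂` on the great circle orthogonal to `u₁` give the two slabs.
-/

open Metric Module
open scoped RealInnerProductSpace

noncomputable def supportFun {E : Type*} [NormedAddCommGroup E] [InnerProductSpace ℝ E]
    (A : Set E) (u : E) : ℝ :=
  sSup ((fun x => ⟪u, x⟫) '' A)

section SupportFun

variable {E : Type*} [NormedAddCommGroup E] [InnerProductSpace ℝ E] {A : Set E} {u x : E}

theorem continuous_supportFun (hA : IsCompact A) : Continuous (supportFun A) :=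
  hA.continuous_sSup continuous_inner

theorem inner_le_supportFun (hA : IsCompact A) (hx : x ∈ A) : ⟪u, x⟫ ≤ supportFun A u :=
  le_csSup (hA.image (continuous_const.inner continuous_id)).bddAbove ⟨x, hx, rfl⟩

theorem exists_inner_eq_supportFun (hA : IsCompact A) (hne : A.Nonempty) (u : E) :
    ∃ y ∈ A, ⟪u, y⟫ = supportFun A u :=
  (hA.image (continuous_const.inner continuous_id)).sSup_mem (hne.image _)

theorem supportFun_add_supportFun_neg_le (hA : IsCompact A) (hne : A.Nonempty) (u : E) :
    supportFun A u + supportFun A (-u) ≤ ‖u‖ * diam A := by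
  obtain ⟨y, hy, hyu⟩ := exists_inner_eq_supportFun hA hne u
  obtain ⟨z, hz, hzu⟩ := exists_inner_eq_supportFun hA hne (-u)
  calc supportFun A u + supportFun A (-u) = ⟪u, y - z⟫ := by
        rw [← hyu, ← hzu, inner_sub_right, inner_neg_left, sub_eq_add_neg]
    _ ≤ ‖u‖ * ‖y - z‖ := real_inner_le_norm u (y - z)
    _ ≤ ‖u‖ * diam A := by
        rw [← dist_eq_norm]
        exact mul_le_mul_of_nonneg_left (dist_le_diam_of_mem hA.isBounded hy hz) (norm_nonneg u)

theorem abs_inner_le_half_diam_of_supportFun_neg_eq (hA : IsCompact A) (hu : ‖u‖ = 1)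
    (hsymm : supportFun A (-u) = supportFun A u) (hx : x ∈ A) : |⟪u, x⟫| ≤ diam A / 2 := by
  have hwidth := supportFun_add_supportFun_neg_le hA ⟨x, hx⟩ u
  have hle := inner_le_supportFun (u := u) hA hx
  have hle_neg := inner_le_supportFun (u := -u) hA hx
  rw [inner_neg_left] at hle_neg
  rw [hu, one_mul, hsymm] at hwidth
  rw [abs_le]
  constructor <;> linarith

end SupportFun

theorem exists_norm_eq_one_apply_neg_eq {F : Type*} [NormedAddCommGroup F] [NormedSpace ℝ F]
    (hF : 1 < Module.rank ℝ F) {g : F → ℝ} (hg : Continuous g) :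
    ∃ u, ‖u‖ = 1 ∧ g (-u) = g u := by
  have : Nontrivial F := rank_pos_iff_nontrivial.mp (zero_lt_one.trans hF)
  obtain ⟨v, hv⟩ := exists_norm_eq F zero_le_one
  have hsphere : IsPreconnected (sphere (0 : F) 1) :=
    (isConnected_sphere hF 0 zero_le_one).isPreconnected
  have hv_mem : v ∈ sphere (0 : F) 1 := by simpa using hv
  have hv_neg_mem : -v ∈ sphere (0 : F) 1 := by simpa using hv
  have hcont_neg : ContinuousOn (fun u => g (-u)) (sphere (0 : F) 1) :=
    (hg.comp continuous_neg).continuousOn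
  obtain ⟨u, hu, hzero⟩ : ∃ u ∈ sphere (0 : F) 1, g (-u) = g u := by
    rcases le_total (g (-v)) (g v) with h | h
    · exact hsphere.intermediate_value₂ hv_mem hv_neg_mem hcont_neg hg.continuousOn h
        (by simpa using h)
    · exact hsphere.intermediate_value₂ hv_neg_mem hv_mem hcont_neg hg.continuousOn
        (by simpa using h) h
  exact ⟨u, by simpa using hu, hzero⟩

theorem exists_orthonormal_pair_apply_neg_eq {E : Type*} [NormedAddCommGroup E]
    [InnerProductSpace ℝ E] [FiniteDimensional ℝ E] (hE : 2 < finrank ℝ E) {f : E → ℝ}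
    (hf : Continuous f) :
    ∃ u₁ u₂ : E, ‖u₁‖ = 1 ∧ ‖u₂‖ = 1 ∧ ⟪u₁, u₂⟫ = 0 ∧ f (-u₁) = f u₁ ∧ f (-u₂) = f u₂ := by
  obtain ⟨u₁, hu₁, hf₁⟩ := exists_norm_eq_one_apply_neg_eq
    (by rw [← finrank_eq_rank]; exact_mod_cast (by omega : 1 < finrank ℝ E)) hf
  have hu₁_ne : u₁ ≠ 0 := norm_ne_zero_iff.mp (by simp [hu₁])
  have hK : 1 < finrank ℝ (ℝ ∙ u₁)ᗮ := by
    have := Submodule.finrank_add_finrank_orthogonal (ℝ ∙ u₁)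
    rw [finrank_span_singleton hu₁_ne] at this
    omega
  obtain ⟨u₂, hu₂, hf₂⟩ := exists_norm_eq_one_apply_neg_eq (F := (ℝ ∙ u₁)ᗮ)
    (by rw [← finrank_eq_rank]; exact_mod_cast hK) (hf.comp continuous_subtype_val)
  exact ⟨u₁, u₂, hu₁, hu₂, Submodule.mem_orthogonal_singleton_iff_inner_right.mp u₂.2, hf₁, hf₂⟩

theorem stmt_7_general (A : Set (EuclideanSpace ℝ (Fin 3)))
    (hAc : IsCompact A) (hdiam : Metric.diam A ≤ 1) :
    ∃ u₁ u₂ : EuclideanSpace ℝ (Fin 3), ‖u₁‖ = 1 ∧ ‖u₂‖ = 1 ∧ (inner ℝ u₁ u₂ : ℝ) = 0 ∧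
      A ⊆ {x | |(inner ℝ u₁ x : ℝ)| ≤ 1/2 ∧ |(inner ℝ u₂ x : ℝ)| ≤ 1/2} := by
  obtain ⟨u₁, u₂, hu₁, hu₂, horth, hsymm₁, hsymm₂⟩ :=
    exists_orthonormal_pair_apply_neg_eq (by simp) (continuous_supportFun hAc)
  refine ⟨u₁, u₂, hu₁, hu₂, horth, fun x hx => ⟨?_, ?_⟩⟩
  · exact (abs_inner_le_half_diam_of_supportFun_neg_eq hAc hu₁ hsymm₁ hx).trans (by linarith)
  · exact (abs_inner_le_half_diam_of_supportFun_neg_eq hAc hu₂ hsymm₂ hx).trans (by linarith)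

theorem stmt_7 (A : Set (EuclideanSpace ℝ (Fin 3)))
    (hAc : IsCompact A) (hAconv : Convex ℝ A)
    (h0 : (0 : EuclideanSpace ℝ (Fin 3)) ∈ A) (hdiam : Metric.diam A ≤ 1) :
    ∃ u₁ u₂ : EuclideanSpace ℝ (Fin 3), ‖u₁‖ = 1 ∧ ‖u₂‖ = 1 ∧ (inner ℝ u₁ u₂ : ℝ) = 0 ∧
      A ⊆ {x | |(inner ℝ u₁ x : ℝ)| ≤ 1/2 ∧ |(inner ℝ u₂ x : ℝ)| ≤ 1/2} :=
  stmt_7_general A hAc hdiam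
end

section
/- Let S be a universal covering system in R^n, let C ∈ S, and let H^+, H^- be two closed half-spaces whose bounding hyperplanes are parallel and at distance 1 apart, with H^+ ∪ H^- = R^n. Then (S \ {C}) ∪ {C ∩ H^+, C ∩ H^-} is again a universal covering system: every set of unit diameter in R^n is covered by an isometric copy of some element of the new system. -/
/-!
A set of diameter at most `1` cannot reach both beyond the hyperplane `⟪u, x⟫ = a` and below the
hyperplane `⟪u, x⟫ = a - 1`, so every such subset of `C` lies in `C ∩ H⁺` or in `C ∩ H⁻`. Replacing a
member of a universal covering system by pieces that together still contain each of its subsets of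
diameter at most `1` keeps it universal, because the covering isometries can be reused.
-/

/-- A family of subsets of `ℝⁿ` is a universal covering system if every bounded
set of diameter at most 1 is contained in an isometric image of some member. -/
def IsUCS {n : ℕ} (S : Set (Set (EuclideanSpace ℝ (Fin n)))) : Prop :=
  ∀ F : Set (EuclideanSpace ℝ (Fin n)), Bornology.IsBounded F → Metric.diam F ≤ 1 →
    ∃ C ∈ S, ∃ f : EuclideanSpace ℝ (Fin n) ≃ᵢ EuclideanSpace ℝ (Fin n), F ⊆ f '' C

open Metric

theorem subset_halfspace_or_subset_halfspace {E : Type*} [NormedAddCommGroup E]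
    [InnerProductSpace ℝ E] {G : Set E} (hG : Bornology.IsBounded G) {u : E} {a b : ℝ}
    (h : ‖u‖ * diam G ≤ b - a) :
    G ⊆ {x | inner ℝ u x ≤ b} ∨ G ⊆ {x | a ≤ inner ℝ u x} := by
  refine or_iff_not_imp_left.2 fun hb => ?_
  obtain ⟨x, hx, hxb⟩ := Set.not_subset.1 hb
  intro y hy
  have hxy : inner ℝ u x - inner ℝ u y ≤ b - a :=
    calc inner ℝ u x - inner ℝ u y = inner ℝ u (x - y) := (inner_sub_right u x y).symm
      _ ≤ ‖u‖ * ‖x - y‖ := real_inner_le_norm u (x - y)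
      _ ≤ ‖u‖ * diam G := by
        rw [← dist_eq_norm]
        exact mul_le_mul_of_nonneg_left (dist_le_diam_of_mem hG hx hy) (norm_nonneg u)
      _ ≤ b - a := h
  have hxb' : b < inner ℝ u x := not_le.1 hxb
  show a ≤ inner ℝ u y
  linarith

theorem IsUCS.of_refines {n : ℕ} {S T : Set (Set (EuclideanSpace ℝ (Fin n)))} (hS : IsUCS S)
    (hST : ∀ C ∈ S, ∀ G ⊆ C, Bornology.IsBounded G → diam G ≤ 1 → ∃ D ∈ T, G ⊆ D) :
    IsUCS T := by
  intro F hFb hFd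
  obtain ⟨C, hC, f, hFC⟩ := hS F hFb hFd
  obtain ⟨D, hD, hGD⟩ := hST C hC (f.symm '' F)
    (by
      rw [f.image_symm]
      exact (Set.preimage_mono hFC).trans (Set.preimage_image_eq C f.injective).le)
    (f.symm.isometry.lipschitz.isBounded_image hFb)
    (by rwa [f.symm.isometry.diam_image])
  refine ⟨D, hD, f, ?_⟩
  rw [← f.image_symm_image F]
  exact Set.image_mono hGD

theorem stmt_10_general (n : ℕ) (S : Set (Set (EuclideanSpace ℝ (Fin n)))) (hS : IsUCS S)
    (C : Set (EuclideanSpace ℝ (Fin n)))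
    (u : EuclideanSpace ℝ (Fin n)) (hu : ‖u‖ = 1) (a : ℝ)
    (Hp Hm : Set (EuclideanSpace ℝ (Fin n)))
    (hHp : Hp = {x | (inner ℝ u x : ℝ) ≤ a})
    (hHm : Hm = {x | a - 1 ≤ (inner ℝ u x : ℝ)}) :
    IsUCS ((S \ {C}) ∪ {C ∩ Hp, C ∩ Hm}) := by
  subst hHp hHm
  refine hS.of_refines fun C' hC' G hGC hGb hGd => ?_
  by_cases hCC : C' = C
  · subst hCC
    have hdiam : ‖u‖ * diam G ≤ a - (a - 1) := by rw [hu, one_mul]; linarith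
    rcases subset_halfspace_or_subset_halfspace hGb hdiam with hG | hG
    · exact ⟨_, Or.inr (Set.mem_insert _ _), Set.subset_inter hGC hG⟩
    · exact ⟨_, Or.inr (Set.mem_insert_of_mem _ rfl), Set.subset_inter hGC hG⟩
  · exact ⟨C', Or.inl ⟨hC', hCC⟩, hGC⟩

theorem stmt_10 (n : ℕ) (S : Set (Set (EuclideanSpace ℝ (Fin n)))) (hS : IsUCS S)
    (C : Set (EuclideanSpace ℝ (Fin n))) (hC : C ∈ S)
    (u : EuclideanSpace ℝ (Fin n)) (hu : ‖u‖ = 1) (a : ℝ)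
    (Hp Hm : Set (EuclideanSpace ℝ (Fin n)))
    (hHp : Hp = {x | (inner ℝ u x : ℝ) ≤ a})
    (hHm : Hm = {x | a - 1 ≤ (inner ℝ u x : ℝ)}) :
    IsUCS ((S \ {C}) ∪ {C ∩ Hp, C ∩ Hm}) :=
  stmt_10_general n S hS C u hu a Hp Hm hHp hHm
end
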